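/- Let V be a finite-dimensional real normed vector space, g a symmetric bilinear form on V, κ ≠ 0 a real number, and T > 0. Let Y : [0,T] → End(V) be continuously differentiable with Y(t) g-antisymmetric for every t; let c : [0,T] → V be differentiable with c'(t) = Y(t)(c(t)) for all t and g(c(0), c(0)) = 2κ; let R : [0,T] → End(V) be such that each R(t) is g-symmetric and g(R(t)(u), c(t)) = 0 for all u ∈ V and all t; and let P : [0,T] → Hom(V, End(V)) be such that for every t: P(t)(u) is g-antisymmetric for every u ∈ V, g(u, P(t)(v)(w)) + g(v, P(t)(w)(u)) + g(w, P(t)(u)(v)) = 0 for all u, v, w ∈ V, and P(t)(c(t)) = Y'(t). Call a twice differentiable J : [0,T] → V an energy-constrained Jacobi field if J''(t) + R(t)(J(t)) − P(t)(J(t))(c(t)) − Y(t)(J'(t)) − (1/(2κ))·g(J'(0), c(0))·Y(t)(c(t)) = 0 for all t. For each t define 𝔤ₜ(u,v) = g(u,v) − (1/(2κ))·g(c(t),u)·g(c(t),v) and ω̂ₜ((u₁,v₁),(u₂,v₂)) = 𝔤ₜ(v₁,u₂) − 𝔤ₜ(u₁,v₂) + g(u₁, Y(t)(u₂)). Then for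 any two energy-constrained Jacobi fields J₁ and J₂, the function t ↦ ω̂ₜ((J₁(t), J₁'(t)), (J₂(t), J₂'(t))) is constant on [0,T]. -/

import Mathlib

variable {V : Type*} [NormedAddCommGroup V] [NormedSpace ℝ V]

/-- The bilinear form `g` as a continuous bilinear map (finite dimensions). -/
noncomputable def gCLM [FiniteDimensional ℝ V] (g : LinearMap.BilinForm ℝ V) :
    V →L[ℝ] V →L[ℝ] ℝ :=
  LinearMap.toContinuousLinearMap
    ((LinearMap.toContinuousLinearMap : (V →ₗ[ℝ] ℝ) ≃ₗ[ℝ] (V →L[ℝ] ℝ)).toLinearMap.comp g)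

@[simp] lemma gCLM_apply [FiniteDimensional ℝ V] (g : LinearMap.BilinForm ℝ V) (x y : V) :
    gCLM g x y = g x y := rfl

lemma hasDerivWithinAt_bilin [FiniteDimensional ℝ V] (g : LinearMap.BilinForm ℝ V)
    {u v : ℝ → V} {u' v' : V} {s : Set ℝ} {t : ℝ}
    (hu : HasDerivWithinAt u u' s t) (hv : HasDerivWithinAt v v' s t) :
    HasDerivWithinAt (fun τ => g (u τ) (v τ)) (g u' (v t) + g (u t) v') s t := by
  have h1 : HasDerivWithinAt (fun τ => gCLM g (u τ)) (gCLM g u') s t :=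
    ((gCLM g).hasFDerivAt.comp_hasDerivWithinAt t hu)
  simpa using h1.clm_apply hv

lemma constOn_of_derivWithin_zero {f : ℝ → ℝ} {T : ℝ}
    (hf : ∀ t ∈ Set.Icc (0:ℝ) T, HasDerivWithinAt f 0 (Set.Icc 0 T) t) :
    ∀ t ∈ Set.Icc (0:ℝ) T, f t = f 0 := by
  apply constant_of_has_deriv_right_zero
  · exact fun t ht => (hf t ht).continuousWithinAt
  · intro x hx
    exact (hf x (Set.mem_Icc_of_Ico hx)).mono_of_mem_nhdsWithin (Icc_mem_nhdsGE_of_mem hx)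

/-- The presymplectic form
`ω̂((u₁,v₁),(u₂,v₂)) = 𝔤(v₁,u₂) − 𝔤(u₁,v₂) + g(u₁, Yt u₂)` on `V × V`, where
`𝔤(u,v) = g(u,v) − (1/(2κ))·g(w,u)·g(w,v)`. -/
noncomputable def omegaHat (g : LinearMap.BilinForm ℝ V) (κ : ℝ) (Yt : V →L[ℝ] V) (w : V)
    (z₁ z₂ : V × V) : ℝ :=
  (g z₁.2 z₂.1 - (1 / (2 * κ)) * (g w z₁.2 * g w z₂.1))
    - (g z₁.1 z₂.2 - (1 / (2 * κ)) * (g w z₁.1 * g w z₂.2))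
    + g z₁.1 (Yt z₂.1)

/-- **Lemma `propjacobisymplectic` (in a parallel frame).** Along an electromagnetic
geodesic of energy `κ ≠ 0`, the quantity `ω̂ₜ((J₁, J₁'), (J₂, J₂'))` is constant for any
two energy-constrained Jacobi fields `J₁`, `J₂`. -/
theorem omegaHat_ecJacobi_const
    [FiniteDimensional ℝ V]
    (g : LinearMap.BilinForm ℝ V) (hgsymm : ∀ u v : V, g u v = g v u)
    (κ : ℝ) (hκ : κ ≠ 0) (T : ℝ) (hT : 0 < T)
    (Y Y' : ℝ → (V →L[ℝ] V))
    (hY : ∀ t ∈ Set.Icc (0:ℝ) T, HasDerivWithinAt Y (Y' t) (Set.Icc 0 T) t)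
    (hY'cont : ContinuousOn Y' (Set.Icc 0 T))
    (hYanti : ∀ t ∈ Set.Icc (0:ℝ) T, ∀ u v : V, g (Y t u) v = - g u (Y t v))
    (c : ℝ → V)
    (hc : ∀ t ∈ Set.Icc (0:ℝ) T, HasDerivWithinAt c (Y t (c t)) (Set.Icc 0 T) t)
    (hc0 : g (c 0) (c 0) = 2 * κ)
    (R : ℝ → (V →L[ℝ] V))
    (hRsym : ∀ t ∈ Set.Icc (0:ℝ) T, ∀ u v : V, g (R t u) v = g u (R t v))
    (hRc : ∀ t ∈ Set.Icc (0:ℝ) T, ∀ u : V, g (R t u) (c t) = 0)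
    (P : ℝ → (V →ₗ[ℝ] (V →L[ℝ] V)))
    (hPanti : ∀ t ∈ Set.Icc (0:ℝ) T, ∀ u v w : V, g (P t u v) w = - g v (P t u w))
    (hPcyc : ∀ t ∈ Set.Icc (0:ℝ) T, ∀ u v w : V,
      g u (P t v w) + g v (P t w u) + g w (P t u v) = 0)
    (hPc : ∀ t ∈ Set.Icc (0:ℝ) T, P t (c t) = Y' t)
    (J₁ J₁' J₁'' : ℝ → V)
    (hJ₁ : ∀ t ∈ Set.Icc (0:ℝ) T, HasDerivWithinAt J₁ (J₁' t) (Set.Icc 0 T) t)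
    (hJ₁' : ∀ t ∈ Set.Icc (0:ℝ) T, HasDerivWithinAt J₁' (J₁'' t) (Set.Icc 0 T) t)
    (hODE₁ : ∀ t ∈ Set.Icc (0:ℝ) T,
      J₁'' t + R t (J₁ t) - P t (J₁ t) (c t) - Y t (J₁' t)
        - ((1 / (2 * κ)) * g (J₁' 0) (c 0)) • Y t (c t) = 0)
    (J₂ J₂' J₂'' : ℝ → V)
    (hJ₂ : ∀ t ∈ Set.Icc (0:ℝ) T, HasDerivWithinAt J₂ (J₂' t) (Set.Icc 0 T) t)
    (hJ₂' : ∀ t ∈ Set.Icc (0:ℝ) T, HasDerivWithinAt J₂' (J₂'' t) (Set.Icc 0 T) t)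
    (hODE₂ : ∀ t ∈ Set.Icc (0:ℝ) T,
      J₂'' t + R t (J₂ t) - P t (J₂ t) (c t) - Y t (J₂' t)
        - ((1 / (2 * κ)) * g (J₂' 0) (c 0)) • Y t (c t) = 0) :
    ∀ t₁ ∈ Set.Icc (0:ℝ) T, ∀ t₂ ∈ Set.Icc (0:ℝ) T,
      omegaHat g κ (Y t₁) (c t₁) (J₁ t₁, J₁' t₁) (J₂ t₁, J₂' t₁)
        = omegaHat g κ (Y t₂) (c t₂) (J₁ t₂, J₁' t₂) (J₂ t₂, J₂' t₂) := by
  -- some pointwise algebraic facts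
  have fP0 : ∀ t ∈ Set.Icc (0:ℝ) T, ∀ u : V, g (c t) (P t u (c t)) = 0 := by
    intro t ht u
    have h1 := hPanti t ht u (c t) (c t)
    have h2 := hgsymm (c t) (P t u (c t))
    linarith
  have fY : ∀ t ∈ Set.Icc (0:ℝ) T, ∀ x : V,
      g (c t) (Y t x) = -(g (Y t (c t)) x) := by
    intro t ht x
    have h1 := hgsymm (c t) (Y t x)
    have h2 := hYanti t ht x (c t)
    have h3 := hgsymm x (Y t (c t))
    linarith
  have fYc : ∀ t ∈ Set.Icc (0:ℝ) T, g (c t) (Y t (c t)) = 0 := by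
    intro t ht
    have h1 := fY t ht (c t)
    have h2 := hgsymm (c t) (Y t (c t))
    linarith
  have fR : ∀ t ∈ Set.Icc (0:ℝ) T, ∀ u : V, g (c t) (R t u) = 0 := by
    intro t ht u
    rw [hgsymm]; exact hRc t ht u
  -- key: g(c, J'') = -g(Yc, J') for solutions of the ODE
  have hkey : ∀ (J J' J'' : ℝ → V),
      (∀ t ∈ Set.Icc (0:ℝ) T,
        J'' t + R t (J t) - P t (J t) (c t) - Y t (J' t)
          - ((1 / (2 * κ)) * g (J' 0) (c 0)) • Y t (c t) = 0) →
      ∀ t ∈ Set.Icc (0:ℝ) T, g (c t) (J'' t) = -(g (Y t (c t)) (J' t)) := by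
    intro J J' J'' hODE t ht
    have o := congrArg (g (c t)) (hODE t ht)
    simp only [map_add, map_sub, map_smul, map_zero, smul_eq_mul] at o
    have f1 := fR t ht (J t)
    have f2 := fP0 t ht (J t)
    have f3 := fY t ht (J' t)
    have f4 := fYc t ht
    linear_combination o - f1 + f2 + f3 + (1 / (2 * κ) * g (J' 0) (c 0)) * f4
  -- conservation of g(c t, J' t)
  have hcons : ∀ (J J' J'' : ℝ → V),
      (∀ t ∈ Set.Icc (0:ℝ) T, HasDerivWithinAt J' (J'' t) (Set.Icc 0 T) t) →
      (∀ t ∈ Set.Icc (0:ℝ) T,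
        J'' t + R t (J t) - P t (J t) (c t) - Y t (J' t)
          - ((1 / (2 * κ)) * g (J' 0) (c 0)) • Y t (c t) = 0) →
      ∀ t ∈ Set.Icc (0:ℝ) T, g (c t) (J' t) = g (c 0) (J' 0) := by
    intro J J' J'' hJ' hODE
    apply constOn_of_derivWithin_zero
    intro t ht
    have hd := hasDerivWithinAt_bilin g (hc t ht) (hJ' t ht)
    have hz : g (Y t (c t)) (J' t) + g (c t) (J'' t) = 0 := by
      rw [hkey J J' J'' hODE t ht]; ring
    exact hz ▸ hd
  -- the quantity has zero derivative
  have hderiv : ∀ t ∈ Set.Icc (0:ℝ) T,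
      HasDerivWithinAt
        (fun τ => omegaHat g κ (Y τ) (c τ) (J₁ τ, J₁' τ) (J₂ τ, J₂' τ)) 0
        (Set.Icc 0 T) t := by
    intro t ht
    have e1 := hasDerivWithinAt_bilin g (hJ₁' t ht) (hJ₂ t ht)
    have e2 := hasDerivWithinAt_bilin g (hc t ht) (hJ₁' t ht)
    have e3 := hasDerivWithinAt_bilin g (hc t ht) (hJ₂ t ht)
    have e4 := hasDerivWithinAt_bilin g (hJ₁ t ht) (hJ₂' t ht)
    have e5 := hasDerivWithinAt_bilin g (hc t ht) (hJ₁ t ht)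
    have e6 := hasDerivWithinAt_bilin g (hc t ht) (hJ₂' t ht)
    have e7 := hasDerivWithinAt_bilin g (hJ₁ t ht) ((hY t ht).clm_apply (hJ₂ t ht))
    have hF := ((e1.sub ((e2.mul e3).const_mul (1 / (2 * κ)))).sub
      (e4.sub ((e5.mul e6).const_mul (1 / (2 * κ))))).add e7
    have hfun : (fun τ => omegaHat g κ (Y τ) (c τ) (J₁ τ, J₁' τ) (J₂ τ, J₂' τ))
        = fun τ => (g (J₁' τ) (J₂ τ) - 1 / (2 * κ) * (g (c τ) (J₁' τ) * g (c τ) (J₂ τ)))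
          - (g (J₁ τ) (J₂' τ) - 1 / (2 * κ) * (g (c τ) (J₁ τ) * g (c τ) (J₂' τ)))
          + g (J₁ τ) (Y τ (J₂ τ)) := by
      funext τ; simp [omegaHat]
    rw [hfun]
    convert hF using 1
    case e'_4 => rfl
    case e'_5 => rfl
    case e'_8 => rfl
    -- now prove 0 = the computed derivative
    have ha : g (J₁' 0) (c 0) = g (c t) (J₁' t) := by
      rw [hgsymm]; exact (hcons J₁ J₁' J₁'' hJ₁' hODE₁ t ht).symm
    have hb : g (J₂' 0) (c 0) = g (c t) (J₂' t) := by
      rw [hgsymm]; exact (hcons J₂ J₂' J₂'' hJ₂' hODE₂ t ht).symm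
    have h1 : g (J₁'' t) (J₂ t)
        = -(g (c t) (P t (J₁ t) (J₂ t))) - g (J₁' t) (Y t (J₂ t))
          + (1 / (2 * κ) * g (c t) (J₁' t)) * g (Y t (c t)) (J₂ t)
          - g (J₁ t) (R t (J₂ t)) := by
      have o := congrArg (fun x => g x (J₂ t)) (hODE₁ t ht)
      simp only [map_add, map_sub, map_smul, map_zero, LinearMap.add_apply,
        LinearMap.sub_apply, LinearMap.smul_apply, LinearMap.zero_apply, smul_eq_mul] at o
      have r1 := hPanti t ht (J₁ t) (c t) (J₂ t)
      have r2 := hYanti t ht (J₁' t) (J₂ t)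
      have r3 := hRsym t ht (J₁ t) (J₂ t)
      linear_combination o + r1 + r2 - r3 + (1 / (2 * κ) * g (Y t (c t)) (J₂ t)) * ha
    have h2 : g (c t) (J₁'' t) = -(g (Y t (c t)) (J₁' t)) := hkey J₁ J₁' J₁'' hODE₁ t ht
    have h4 : g (c t) (J₂'' t) = -(g (Y t (c t)) (J₂' t)) := hkey J₂ J₂' J₂'' hODE₂ t ht
    have h3 : g (J₁ t) (J₂'' t)
        = g (J₁ t) (P t (J₂ t) (c t)) + g (J₁ t) (Y t (J₂' t))
          + (1 / (2 * κ) * g (c t) (J₂' t)) * g (Y t (c t)) (J₁ t)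
          - g (J₁ t) (R t (J₂ t)) := by
      have o := congrArg (g (J₁ t)) (hODE₂ t ht)
      simp only [map_add, map_sub, map_smul, map_zero, smul_eq_mul] at o
      have rsym := hgsymm (J₁ t) (Y t (c t))
      linear_combination o + (1 / (2 * κ) * g (J₂' 0) (c 0)) * rsym
        + (1 / (2 * κ) * g (Y t (c t)) (J₁ t)) * hb
    have h5 : g (J₁ t) (Y' t (J₂ t))
        = g (J₁ t) (P t (J₂ t) (c t)) + g (c t) (P t (J₁ t) (J₂ t)) := by
      rw [← hPc t ht]
      have cyc := hPcyc t ht (J₁ t) (J₂ t) (c t)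
      have r1 := hgsymm (J₁ t) (P t (c t) (J₂ t))
      have r2 := hPanti t ht (c t) (J₂ t) (J₁ t)
      linarith
    simp only [map_add]
    rw [h1, h2, h3, h4, h5]
    ring
  -- conclude by constancy
  intro t₁ ht₁ t₂ ht₂
  have := constOn_of_derivWithin_zero hderiv
  rw [this t₁ ht₁, this t₂ ht₂]
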